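/- arXiv:1510.03232 — 6 statements merged into one kernel-verified Lean document; each statement's English description precedes it below -/
import Mathlib

section
/- Suppose the contact wrench cone is spanned by generators (f_i, τ_{O,i}), i.e., every wrench in it has the form (Σᵢ λᵢ f_i, Σᵢ λᵢ τ_{O,i}) with λᵢ ≥ 0. Define p_{Z_i} = (n × τ_{O,i})/(n · f_i) and virtual pressures p_i = n · f_i. Then for any wrench in the cone with n · f ≠ 0, the ZMP satisfies p_Z = (Σᵢ λᵢ p_i p_{Z_i})/(Σᵢ λᵢ p_i). -/
open Matrix

/-- For a wrench in the span of the contact wrench cone generators,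
the ZMP is the weighted combination of the points `Z_i` with weights `λ_i p_i`. -/
theorem zmp_weighted_combination (N : ℕ) (n : Fin 3 → ℝ) (hn : n ⬝ᵥ n = 1)
    (f τO : Fin N → Fin 3 → ℝ) (lam : Fin N → ℝ)
    (hlam : ∀ i, 0 ≤ lam i)
    (hpi : ∀ i, n ⬝ᵥ f i ≠ 0)
    (F TO : Fin 3 → ℝ)
    (hF : F = ∑ i, lam i • f i)
    (hTO : TO = ∑ i, lam i • τO i)
    (hnf : n ⬝ᵥ F ≠ 0)
    (Z : Fin N → Fin 3 → ℝ)
    (hZ : ∀ i, Z i = (n ⬝ᵥ f i)⁻¹ • crossProduct n (τO i))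
    (p : Fin N → ℝ)
    (hp : ∀ i, p i = n ⬝ᵥ f i) :
    (n ⬝ᵥ F)⁻¹ • crossProduct n TO
      = (∑ i, lam i * p i)⁻¹ • ∑ i, (lam i * p i) • Z i := by
  have hsum : n ⬝ᵥ F = ∑ i, lam i * p i := by
    simp [hF, dotProduct, hp, Finset.mul_sum, Finset.sum_add_distrib]
    ring_nf
    rw [Finset.sum_comm]
    apply Finset.sum_congr rfl; intros
    apply Finset.sum_congr rfl; intros; ring
  have hterm : ∀ i, (lam i * p i) • Z i = lam i • crossProduct n (τO i) := by
    intro i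
    rw [hZ, hp, smul_smul, mul_assoc, mul_inv_cancel₀ (hpi i), mul_one]
  rw [hsum.symm]
  congr 1
  · rw [hTO, map_sum]
    simp [hterm, _root_.map_smul]
end

section
/- If all virtual pressures p_i = n · f_i of the cone generators are strictly positive, then the ZMP support area S = { (n × τ_O)/(n · f) : (f, τ_O) = Σᵢ λᵢ (f_i, τ_{O,i}), λᵢ ≥ 0, not all zero } equals the convex hull of the points Z_i = (n × τ_{O,i})/(n · f_i). -/
open Matrix

theorem dot_sum_smul (N : ℕ) (n : Fin 3 → ℝ) (f : Fin N → Fin 3 → ℝ)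
    (lam : Fin N → ℝ) :
    n ⬝ᵥ (∑ i, lam i • f i) = ∑ i, lam i * (n ⬝ᵥ f i) := by
  simp only [dotProduct, Finset.sum_apply, Pi.smul_apply, smul_eq_mul,
    Finset.mul_sum]
  rw [Finset.sum_comm]
  congr 1; ext i; congr 1; ext j; ring

theorem cross_sum_smul (N : ℕ) (n : Fin 3 → ℝ) (τO : Fin N → Fin 3 → ℝ)
    (lam : Fin N → ℝ) :
    crossProduct n (∑ i, lam i • τO i) = ∑ i, lam i • crossProduct n (τO i) := by
  rw [map_sum]
  simp only [_root_.map_smul]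

/-- When all virtual pressures `p_i = n ⋅ f_i` are strictly positive,
the full ZMP support area equals the convex hull of the points
`Z_i = (n × τ_{O,i}) / (n ⋅ f_i)`. -/
theorem full_support_area_positive_pressures (N : ℕ) (n : Fin 3 → ℝ)
    (hn : n ⬝ᵥ n = 1)
    (f τO : Fin N → Fin 3 → ℝ)
    (hpos : ∀ i, 0 < n ⬝ᵥ f i)
    (Z : Fin N → Fin 3 → ℝ)
    (hZ : ∀ i, Z i = (n ⬝ᵥ f i)⁻¹ • crossProduct n (τO i)) :
    {z : Fin 3 → ℝ | ∃ lam : Fin N → ℝ, (∀ i, 0 ≤ lam i) ∧ lam ≠ 0 ∧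
        n ⬝ᵥ (∑ i, lam i • f i) ≠ 0 ∧
        z = (n ⬝ᵥ (∑ i, lam i • f i))⁻¹ • crossProduct n (∑ i, lam i • τO i)}
      = convexHull ℝ (Set.range Z) := by
  have hcross : ∀ i, crossProduct n (τO i) = (n ⬝ᵥ f i) • Z i := by
    intro i
    rw [hZ i, smul_smul, mul_inv_cancel₀ (hpos i).ne', one_smul]
  apply Set.Subset.antisymm
  · rintro z ⟨lam, hlam0, hlamne, hne, hzeq⟩
    have hsum : n ⬝ᵥ (∑ i, lam i • f i) = ∑ i, lam i * (n ⬝ᵥ f i) :=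
      dot_sum_smul N n f lam
    have hw0 : ∀ i ∈ Finset.univ, 0 ≤ lam i * (n ⬝ᵥ f i) :=
      fun i _ => mul_nonneg (hlam0 i) (hpos i).le
    have hws : 0 < ∑ i, lam i * (n ⬝ᵥ f i) :=
      lt_of_le_of_ne (Finset.sum_nonneg hw0) (Ne.symm (hsum ▸ hne))
    have hmem := Finset.centerMass_mem_convexHull (Finset.univ)
      hw0 hws (fun i _ => Set.mem_range_self (f := Z) i)
    have hzcm : z = Finset.univ.centerMass (fun i => lam i * (n ⬝ᵥ f i)) Z := by
      rw [Finset.centerMass, hzeq, hsum, cross_sum_smul]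
      congr 1
      refine Finset.sum_congr rfl fun i _ => ?_
      rw [hcross i, smul_smul]
    rw [hzcm]
    exact hmem
  · apply convexHull_min
    · rintro _ ⟨i, rfl⟩
      refine ⟨fun j => if j = i then 1 else 0, fun j => by positivity, ?_, ?_, ?_⟩
      · intro h
        have := congrFun h i
        simp at this
      · rw [dot_sum_smul]
        simp only [ite_mul, one_mul, zero_mul, Finset.sum_ite_eq', Finset.mem_univ,
          if_true]
        exact (hpos i).ne'
      · rw [dot_sum_smul]
        simp only [ite_mul, one_mul, zero_mul, Finset.sum_ite_eq', Finset.mem_univ,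
          if_true]
        have h2 : (∑ j, (if j = i then (1:ℝ) else 0) • τO j) = τO i := by
          simp [ite_smul]
        rw [h2, hZ i]
    · rintro x ⟨lam, hl0, hlne, hlsum, rfl⟩ y ⟨mu, hm0, hmne, hmsum, rfl⟩ a b ha hb hab
      set s := n ⬝ᵥ (∑ i, lam i • f i) with hs
      set t := n ⬝ᵥ (∑ i, mu i • f i) with ht
      have hspos : 0 < s := lt_of_le_of_ne
        (by rw [hs, dot_sum_smul]; exact Finset.sum_nonneg fun i _ =>
          mul_nonneg (hl0 i) (hpos i).le) (Ne.symm hlsum)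
      have htpos : 0 < t := lt_of_le_of_ne
        (by rw [ht, dot_sum_smul]; exact Finset.sum_nonneg fun i _ =>
          mul_nonneg (hm0 i) (hpos i).le) (Ne.symm hmsum)
      set w : Fin N → ℝ := fun i => (a / s) * lam i + (b / t) * mu i with hw
      have hdots : n ⬝ᵥ (∑ i, w i • f i) = 1 := by
        rw [dot_sum_smul]
        have h1 : ∑ i, w i * (n ⬝ᵥ f i)
            = (a / s) * (∑ i, lam i * (n ⬝ᵥ f i)) + (b / t) * (∑ i, mu i * (n ⬝ᵥ f i)) := by
          rw [Finset.mul_sum, Finset.mul_sum, ← Finset.sum_add_distrib]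
          exact Finset.sum_congr rfl fun i _ => by simp only [hw]; ring
        rw [h1, ← dot_sum_smul, ← dot_sum_smul, ← hs, ← ht,
          div_mul_cancel₀ _ hspos.ne', div_mul_cancel₀ _ htpos.ne', hab]
      refine ⟨w, ?_, ?_, ?_, ?_⟩
      · intro i
        have h1 := hl0 i
        have h2 := hm0 i
        positivity
      · intro h
        rw [h] at hdots
        simp at hdots
      · rw [hdots]; exact one_ne_zero
      · rw [hdots, inv_one, one_smul, cross_sum_smul N n τO w,
          cross_sum_smul N n τO lam, cross_sum_smul N n τO mu]
        have h3 : (∑ i, w i • crossProduct n (τO i))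
            = (a / s) • (∑ i, lam i • crossProduct n (τO i))
              + (b / t) • (∑ i, mu i • crossProduct n (τO i)) := by
          rw [Finset.smul_sum, Finset.smul_sum, ← Finset.sum_add_distrib]
          refine Finset.sum_congr rfl fun i _ => ?_
          simp only [hw, add_smul, smul_smul]
        rw [h3]
        simp only [smul_smul, div_eq_mul_inv]
end

section
/- Suppose the index set I of generators splits into I⁺ = {i : p_i > 0} and I⁻ = {i : p_i < 0}, both nonempty. Let P⁺ = conv{Z_i : i ∈ I⁺} and P⁻ = conv{Z_i : i ∈ I⁻}. Then the full support area equals C⁺ ∪ C⁻, where C⁺ = P⁺ + R₊·(P⁺ - P⁻) and C⁻ = P⁻ + R₊·(P⁻ - P⁺), and P⁺ - P⁻ denotes the Minkowski difference {z⁺ - z⁻ : z⁺ ∈ P⁺, z⁻ ∈ P⁻}. -/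
open Matrix

lemma mem_hull_iff_weights {N : ℕ} (Z : Fin N → Fin 3 → ℝ) (S : Set (Fin N)) (x : Fin 3 → ℝ) :
    x ∈ convexHull ℝ (Z '' S) ↔
      ∃ w : Fin N → ℝ, (∀ i, 0 ≤ w i) ∧ (∀ i, i ∉ S → w i = 0) ∧
        ∑ i, w i = 1 ∧ x = ∑ i, w i • Z i := by
  classical
  rcases isEmpty_or_nonempty (Fin N) with hN | hN
  · have hS : S = ∅ := Set.eq_empty_of_isEmpty S
    simp [hS]
  constructor
  · intro hx
    rw [_root_.convexHull_eq] at hx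
    obtain ⟨ι, t, w, zf, hw0, hw1, hzS, hcm⟩ := hx
    have hex : ∀ i ∈ t, ∃ j, j ∈ S ∧ Z j = zf i := by
      intro i hi
      exact hzS i hi
    set J : ι → Fin N := fun i =>
      if h : ∃ j, j ∈ S ∧ Z j = zf i then h.choose else Classical.arbitrary _ with hJ
    have hJS : ∀ i ∈ t, J i ∈ S ∧ Z (J i) = zf i := by
      intro i hi
      have h := hex i hi
      simp only [hJ, dif_pos h]
      exact h.choose_spec
    refine ⟨fun k => ∑ i ∈ t.filter (fun i => J i = k), w i, ?_, ?_, ?_, ?_⟩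
    · intro k
      exact Finset.sum_nonneg fun i hi => hw0 i (Finset.mem_filter.mp hi).1
    · intro k hk
      refine Finset.sum_eq_zero fun i hi => ?_
      obtain ⟨hit, hik⟩ := Finset.mem_filter.mp hi
      exact absurd (hik ▸ (hJS i hit).1) hk
    · rw [Finset.sum_fiberwise_of_maps_to (fun i _ => Finset.mem_univ (J i)), hw1]
    · rw [← hcm, Finset.centerMass_eq_of_sum_1 _ _ hw1]
      rw [← Finset.sum_fiberwise_of_maps_to (g := J) (fun i _ => Finset.mem_univ (J i))
        (fun i => w i • zf i)]
      refine Finset.sum_congr rfl fun k _ => ?_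
      rw [Finset.sum_smul]
      refine Finset.sum_congr rfl fun i hi => ?_
      obtain ⟨hit, hik⟩ := Finset.mem_filter.mp hi
      rw [← (hJS i hit).2, hik]
  · rintro ⟨w, hw0, hwS, hw1, rfl⟩
    set t : Finset (Fin N) := Finset.univ.filter (fun i => w i ≠ 0) with ht
    have hsum : ∀ g : Fin N → Fin 3 → ℝ, ∑ i ∈ t, w i • g i = ∑ i, w i • g i := by
      intro g
      refine Finset.sum_subset (Finset.subset_univ t) fun i _ hi => ?_
      have : w i = 0 := by
        by_contra h
        exact hi (Finset.mem_filter.mpr ⟨Finset.mem_univ i, h⟩)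
      simp [this]
    have hw1' : ∑ i ∈ t, w i = 1 := by
      rw [← hw1]
      refine Finset.sum_subset (Finset.subset_univ t) fun i _ hi => ?_
      by_contra h
      exact hi (Finset.mem_filter.mpr ⟨Finset.mem_univ i, h⟩)
    have hmem : t.centerMass w Z ∈ convexHull ℝ (Z '' S) := by
      refine Finset.centerMass_mem_convexHull t (fun i _ => hw0 i) (by rw [hw1']; norm_num)
        fun i hi => ?_
      have hiS : i ∈ S := by
        by_contra h
        exact (Finset.mem_filter.mp hi).2 (hwS i h)
      exact Set.mem_image_of_mem Z hiS
    rwa [Finset.centerMass_eq_of_sum_1 _ _ hw1', hsum] at hmem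

lemma combo_id {a b : ℝ} (h : a - b ≠ 0) (x y : Fin 3 → ℝ) :
    (a - b)⁻¹ • (a • x - b • y) = x + (b / (a - b)) • (x - y) := by
  apply smul_right_injective (Fin 3 → ℝ) h
  simp only []
  rw [smul_inv_smul₀ h]
  have hb : (a - b) • ((b / (a - b)) • (x - y)) = b • (x - y) := by
    rw [smul_smul, mul_div_cancel₀ _ h]
  rw [smul_add, hb]
  module

lemma hull_scaled {N : ℕ} (Z : Fin N → Fin 3 → ℝ) (S : Set (Fin N))
    (P : Fin N → Prop) [DecidablePred P] (hPS : ∀ i, P i → i ∈ S)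
    (s : Fin N → ℝ) (hs : ∀ i, P i → 0 ≤ s i) {a : ℝ}
    (ha : a = ∑ i ∈ Finset.univ.filter P, s i) (hapos : 0 < a) :
    a⁻¹ • ∑ i ∈ Finset.univ.filter P, s i • Z i ∈ convexHull ℝ (Z '' S) := by
  rw [mem_hull_iff_weights]
  refine ⟨fun i => if P i then s i / a else 0, ?_, ?_, ?_, ?_⟩
  · intro i
    by_cases h : P i
    · simp only [if_pos h]
      exact div_nonneg (hs i h) hapos.le
    · simp [if_neg h]
  · intro i hi
    have : ¬ P i := fun h => hi (hPS i h)
    simp [this]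
  · rw [← Finset.sum_filter, ← Finset.sum_div, ← ha, div_self hapos.ne']
  · simp only [ite_smul, zero_smul, ← Finset.sum_filter, Finset.smul_sum]
    exact Finset.sum_congr rfl fun i _ => by rw [smul_smul, ← div_eq_inv_mul]

/-- When the generators split into positive- and negative-pressure
families, the full support area is the union of the two cones
`C⁺ = P⁺ + ℝ₊·(P⁺ - P⁻)` and `C⁻ = P⁻ + ℝ₊·(P⁻ - P⁺)`. -/
theorem full_support_area_two_cones (N : ℕ) (n : Fin 3 → ℝ)
    (hn : n ⬝ᵥ n = 1)
    (f τO : Fin N → Fin 3 → ℝ)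
    (hpne : ∀ i, n ⬝ᵥ f i ≠ 0)
    (Z : Fin N → Fin 3 → ℝ)
    (hZ : ∀ i, Z i = (n ⬝ᵥ f i)⁻¹ • crossProduct n (τO i))
    (Iplus Iminus : Set (Fin N))
    (hIp : Iplus = {i | 0 < n ⬝ᵥ f i})
    (hIm : Iminus = {i | n ⬝ᵥ f i < 0})
    (hIpne : Iplus.Nonempty) (hImne : Iminus.Nonempty)
    (Pplus Pminus : Set (Fin 3 → ℝ))
    (hPp : Pplus = convexHull ℝ (Z '' Iplus))
    (hPm : Pminus = convexHull ℝ (Z '' Iminus))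
    (D : Set (Fin 3 → ℝ))
    (hD : D = {x | ∃ a ∈ Pplus, ∃ b ∈ Pminus, x = a - b})
    (Cplus Cminus : Set (Fin 3 → ℝ))
    (hCp : Cplus = {x | ∃ a ∈ Pplus, ∃ μ : ℝ, 0 ≤ μ ∧ ∃ d ∈ D, x = a + μ • d})
    (hCm : Cminus = {x | ∃ b ∈ Pminus, ∃ μ : ℝ, 0 ≤ μ ∧ ∃ d ∈ D, x = b + μ • (-d)}) :
    {z : Fin 3 → ℝ | ∃ lam : Fin N → ℝ, (∀ i, 0 ≤ lam i) ∧ lam ≠ 0 ∧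
        n ⬝ᵥ (∑ i, lam i • f i) ≠ 0 ∧
        z = (n ⬝ᵥ (∑ i, lam i • f i))⁻¹ • crossProduct n (∑ i, lam i • τO i)}
      = Cplus ∪ Cminus := by
  classical
  have hcross1 : ∀ i, crossProduct n (τO i) = (n ⬝ᵥ f i) • Z i := fun i => by
    rw [hZ i, smul_inv_smul₀ (hpne i)]
  have hdot : ∀ lam : Fin N → ℝ,
      n ⬝ᵥ (∑ i, lam i • f i) = ∑ i, lam i * (n ⬝ᵥ f i) := by
    intro lam
    simp only [dotProduct, Finset.sum_apply, Pi.smul_apply, smul_eq_mul, Finset.mul_sum]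
    rw [Finset.sum_comm]
    refine Finset.sum_congr rfl fun i _ => ?_
    exact Finset.sum_congr rfl fun k _ => by ring
  have hcross : ∀ lam : Fin N → ℝ,
      crossProduct n (∑ i, lam i • τO i) = ∑ i, (lam i * (n ⬝ᵥ f i)) • Z i := by
    intro lam
    rw [map_sum]
    refine Finset.sum_congr rfl fun i _ => ?_
    rw [LinearMap.map_smul, hcross1 i, smul_smul]
  obtain ⟨i₀, hi₀⟩ := hIpne
  obtain ⟨j₀, hj₀⟩ := hImne
  have hZp : Z i₀ ∈ Pplus := hPp ▸ subset_convexHull ℝ _ (Set.mem_image_of_mem Z hi₀)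
  have hZm : Z j₀ ∈ Pminus := hPm ▸ subset_convexHull ℝ _ (Set.mem_image_of_mem Z hj₀)
  have hd₀ : Z i₀ - Z j₀ ∈ D := by
    rw [hD]; exact ⟨Z i₀, hZp, Z j₀, hZm, rfl⟩
  ext z
  simp only [Set.mem_setOf_eq, Set.mem_union]
  constructor
  · rintro ⟨lam, hlam0, hlamne, hne, hz⟩
    rw [hdot] at hne
    rw [hdot, hcross] at hz
    set s : Fin N → ℝ := fun i => lam i * (n ⬝ᵥ f i) with hs
    set A : Finset (Fin N) := Finset.univ.filter (fun i => 0 < n ⬝ᵥ f i) with hA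
    set B : Finset (Fin N) := Finset.univ.filter (fun i => n ⬝ᵥ f i < 0) with hB
    have hBeq : Finset.univ.filter (fun i => ¬ 0 < n ⬝ᵥ f i) = B := by
      rw [hB]
      refine Finset.filter_congr fun i _ => ?_
      simp only [not_lt, eq_iff_iff]
      exact ⟨fun h => lt_of_le_of_ne h (hpne i), fun h => h.le⟩
    have hsplitR : ∀ g : Fin N → ℝ, ∑ i, g i = ∑ i ∈ A, g i + ∑ i ∈ B, g i := by
      intro g
      rw [← Finset.sum_filter_add_sum_filter_not Finset.univ (fun i => 0 < n ⬝ᵥ f i) g, hBeq]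
    have hsplitV : ∀ g : Fin N → Fin 3 → ℝ,
        ∑ i, g i = ∑ i ∈ A, g i + ∑ i ∈ B, g i := by
      intro g
      rw [← Finset.sum_filter_add_sum_filter_not Finset.univ (fun i => 0 < n ⬝ᵥ f i) g, hBeq]
    set a : ℝ := ∑ i ∈ A, s i with ha
    set b : ℝ := ∑ i ∈ B, (- s i) with hb
    have hsA : ∀ i, 0 < n ⬝ᵥ f i → 0 ≤ s i := fun i hi =>
      mul_nonneg (hlam0 i) hi.le
    have hsB : ∀ i, n ⬝ᵥ f i < 0 → 0 ≤ - s i := fun i hi =>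
      neg_nonneg.mpr (mul_nonpos_of_nonneg_of_nonpos (hlam0 i) hi.le)
    have ha0 : 0 ≤ a := Finset.sum_nonneg fun i hi => hsA i (Finset.mem_filter.mp hi).2
    have hb0 : 0 ≤ b := Finset.sum_nonneg fun i hi => hsB i (Finset.mem_filter.mp hi).2
    have habs : ∑ i, s i = a - b := by
      rw [hsplitR s, hb, Finset.sum_neg_distrib, sub_neg_eq_add]
    rw [habs] at hne hz
    rw [hsplitV (fun i => s i • Z i)] at hz
    rcases lt_or_gt_of_ne hne with hlt | hgt
    -- a - b < 0 : the C⁻ cone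
    · have hbpos : 0 < b := by linarith
      set zm : Fin 3 → ℝ := b⁻¹ • ∑ i ∈ B, (- s i) • Z i with hzmdef
      have hzm : zm ∈ Pminus := by
        rw [hPm]
        exact hull_scaled Z Iminus (fun i => n ⬝ᵥ f i < 0)
          (fun i hi => by rw [hIm]; exact hi) (fun i => - s i) hsB hb hbpos
      have hBsum : ∑ i ∈ B, s i • Z i = -(b • zm) := by
        rw [hzmdef, smul_inv_smul₀ hbpos.ne', ← Finset.sum_neg_distrib]
        exact Finset.sum_congr rfl fun i _ => by rw [neg_smul, neg_neg]
      by_cases haz : a = 0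
      · have hAz : ∑ i ∈ A, s i • Z i = 0 := by
          refine Finset.sum_eq_zero fun i hi => ?_
          have := (Finset.sum_eq_zero_iff_of_nonneg
            (fun i hi => hsA i (Finset.mem_filter.mp hi).2)).mp (ha.symm.trans haz) i hi
          rw [this, zero_smul]
        have hzeq : z = zm := by
          rw [hz, hAz, zero_add, hBsum, haz, zero_sub, smul_neg, inv_neg, neg_smul,
            neg_neg, smul_inv_smul₀ hbpos.ne']
        right
        rw [hCm]
        exact ⟨zm, hzm, 0, le_rfl, Z i₀ - Z j₀, hd₀, by rw [hzeq]; simp⟩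
      · have hapos : 0 < a := lt_of_le_of_ne ha0 (Ne.symm haz)
        set zp : Fin 3 → ℝ := a⁻¹ • ∑ i ∈ A, s i • Z i with hzpdef
        have hzp : zp ∈ Pplus := by
          rw [hPp]
          exact hull_scaled Z Iplus (fun i => 0 < n ⬝ᵥ f i)
            (fun i hi => by rw [hIp]; exact hi) s hsA ha hapos
        have hAsum : ∑ i ∈ A, s i • Z i = a • zp := by
          rw [hzpdef, smul_inv_smul₀ hapos.ne']
        have hba : b - a ≠ 0 := by linarith
        have hzeq : z = zm + (a / (b - a)) • (zm - zp) := by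
          rw [hz, hAsum, hBsum, ← combo_id hba zm zp]
          have h1 : a - b = -(b - a) := by ring
          rw [h1, inv_neg, neg_smul]
          congr 1
          rw [← smul_neg]
          congr 1
          abel
        right
        rw [hCm]
        refine ⟨zm, hzm, a / (b - a), div_nonneg ha0 (by linarith), zp - zm, ?_, ?_⟩
        · rw [hD]; exact ⟨zp, hzp, zm, hzm, rfl⟩
        · rw [neg_sub]; exact hzeq
    -- 0 < a - b : the C⁺ cone
    · have hapos : 0 < a := by linarith
      set zp : Fin 3 → ℝ := a⁻¹ • ∑ i ∈ A, s i • Z i with hzpdef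
      have hzp : zp ∈ Pplus := by
        rw [hPp]
        exact hull_scaled Z Iplus (fun i => 0 < n ⬝ᵥ f i)
          (fun i hi => by rw [hIp]; exact hi) s hsA ha hapos
      have hAsum : ∑ i ∈ A, s i • Z i = a • zp := by
        rw [hzpdef, smul_inv_smul₀ hapos.ne']
      by_cases hbz : b = 0
      · have hBz : ∑ i ∈ B, s i • Z i = 0 := by
          refine Finset.sum_eq_zero fun i hi => ?_
          have := (Finset.sum_eq_zero_iff_of_nonneg
            (fun i hi => hsB i (Finset.mem_filter.mp hi).2)).mp (hb.symm.trans hbz) i hi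
          have hz0 : s i = 0 := by linarith [neg_eq_zero.mp this]
          rw [hz0, zero_smul]
        have hzeq : z = zp := by
          rw [hz, hBz, add_zero, hAsum, hbz, sub_zero, smul_inv_smul₀ hapos.ne']
        left
        rw [hCp]
        exact ⟨zp, hzp, 0, le_rfl, Z i₀ - Z j₀, hd₀, by rw [hzeq]; simp⟩
      · have hbpos : 0 < b := lt_of_le_of_ne hb0 (Ne.symm hbz)
        set zm : Fin 3 → ℝ := b⁻¹ • ∑ i ∈ B, (- s i) • Z i with hzmdef
        have hzm : zm ∈ Pminus := by
          rw [hPm]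
          exact hull_scaled Z Iminus (fun i => n ⬝ᵥ f i < 0)
            (fun i hi => by rw [hIm]; exact hi) (fun i => - s i) hsB hb hbpos
        have hBsum : ∑ i ∈ B, s i • Z i = -(b • zm) := by
          rw [hzmdef, smul_inv_smul₀ hbpos.ne', ← Finset.sum_neg_distrib]
          exact Finset.sum_congr rfl fun i _ => by rw [neg_smul, neg_neg]
        have hzeq : z = zp + (b / (a - b)) • (zp - zm) := by
          rw [hz, hAsum, hBsum, ← combo_id hne zp zm, ← sub_eq_add_neg]
        left
        rw [hCp]
        refine ⟨zp, hzp, b / (a - b), div_nonneg hb0 hgt.le, zp - zm, ?_, hzeq⟩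
        rw [hD]; exact ⟨zp, hzp, zm, hzm, rfl⟩
  · rintro (h | h)
    · rw [hCp] at h
      obtain ⟨zA, hzA, μ, hμ, d, hd, hx⟩ := h
      rw [hD] at hd
      obtain ⟨zB, hzB, zC, hzC, rfl⟩ := hd
      rw [hPp, mem_hull_iff_weights] at hzA hzB
      rw [hPm, mem_hull_iff_weights] at hzC
      obtain ⟨α, hα0, hαS, hα1, hαx⟩ := hzA
      obtain ⟨β, hβ0, hβS, hβ1, hβx⟩ := hzB
      obtain ⟨γ, hγ0, hγS, hγ1, hγx⟩ := hzC
      have hαz : ∀ i, n ⬝ᵥ f i < 0 → α i = 0 := fun i hi =>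
        hαS i (by rw [hIp]; simp only [Set.mem_setOf_eq, not_lt]; exact hi.le)
      have hβz : ∀ i, n ⬝ᵥ f i < 0 → β i = 0 := fun i hi =>
        hβS i (by rw [hIp]; simp only [Set.mem_setOf_eq, not_lt]; exact hi.le)
      have hγz : ∀ i, 0 < n ⬝ᵥ f i → γ i = 0 := fun i hi =>
        hγS i (by rw [hIm]; simp only [Set.mem_setOf_eq, not_lt]; exact hi.le)
      set lam : Fin N → ℝ := fun i => (α i + μ * β i - μ * γ i) / (n ⬝ᵥ f i) with hlam
      have hsval : ∀ i, lam i * (n ⬝ᵥ f i) = α i + μ * β i - μ * γ i := fun i =>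
        div_mul_cancel₀ _ (hpne i)
      have hlamnn : ∀ i, 0 ≤ lam i := by
        intro i
        rcases (hpne i).lt_or_gt with hp | hp
        · rw [hlam]
          simp only [hαz i hp, hβz i hp, mul_zero, zero_add, zero_sub]
          rw [div_nonneg_iff]
          right
          exact ⟨by nlinarith [hγ0 i], hp.le⟩
        · rw [hlam]
          simp only [hγz i hp, mul_zero, sub_zero]
          exact div_nonneg (by nlinarith [hα0 i, hβ0 i]) hp.le
      have hsum1 : ∑ i, lam i * (n ⬝ᵥ f i) = 1 := by
        calc ∑ i, lam i * (n ⬝ᵥ f i) = ∑ i, (α i + μ * β i - μ * γ i) :=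
              Finset.sum_congr rfl fun i _ => hsval i
          _ = (∑ i, α i) + μ * (∑ i, β i) - μ * (∑ i, γ i) := by
              rw [Finset.sum_sub_distrib, Finset.sum_add_distrib, ← Finset.mul_sum,
                ← Finset.mul_sum]
          _ = 1 := by rw [hα1, hβ1, hγ1]; ring
      have hsumZ : ∑ i, (lam i * (n ⬝ᵥ f i)) • Z i = zA + μ • (zB - zC) := by
        calc ∑ i, (lam i * (n ⬝ᵥ f i)) • Z i
            = ∑ i, (α i • Z i + μ • (β i • Z i) - μ • (γ i • Z i)) :=
              Finset.sum_congr rfl fun i _ => by rw [hsval i]; module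
          _ = (∑ i, α i • Z i) + μ • (∑ i, β i • Z i) - μ • (∑ i, γ i • Z i) := by
              rw [Finset.sum_sub_distrib, Finset.sum_add_distrib, ← Finset.smul_sum,
                ← Finset.smul_sum]
          _ = zA + μ • (zB - zC) := by rw [← hαx, ← hβx, ← hγx, smul_sub]; abel
      have hexα : ∃ i, α i ≠ 0 := by
        by_contra hc
        push_neg at hc
        simp [hc] at hα1
      obtain ⟨i, hi⟩ := hexα
      have hαpos : 0 < α i := lt_of_le_of_ne (hα0 i) (Ne.symm hi)
      have hpi : 0 < n ⬝ᵥ f i := by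
        by_contra hpi
        exact hi (hαS i (by rw [hIp]; exact hpi))
      have hlampos : 0 < lam i := by
        rw [hlam]
        simp only [hγz i hpi, mul_zero, sub_zero]
        exact div_pos (by nlinarith [hβ0 i]) hpi
      refine ⟨lam, hlamnn, fun hc => absurd (congrFun hc i) hlampos.ne', ?_, ?_⟩
      · rw [hdot, hsum1]; norm_num
      · rw [hdot, hcross, hsum1, hsumZ, hx]; norm_num
    · rw [hCm] at h
      obtain ⟨zA, hzA, μ, hμ, d, hd, hx⟩ := h
      rw [hD] at hd
      obtain ⟨zB, hzB, zC, hzC, rfl⟩ := hd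
      rw [hPm, mem_hull_iff_weights] at hzA hzC
      rw [hPp, mem_hull_iff_weights] at hzB
      obtain ⟨α, hα0, hαS, hα1, hαx⟩ := hzA
      obtain ⟨β, hβ0, hβS, hβ1, hβx⟩ := hzB
      obtain ⟨γ, hγ0, hγS, hγ1, hγx⟩ := hzC
      have hαz : ∀ i, 0 < n ⬝ᵥ f i → α i = 0 := fun i hi =>
        hαS i (by rw [hIm]; simp only [Set.mem_setOf_eq, not_lt]; exact hi.le)
      have hβz : ∀ i, n ⬝ᵥ f i < 0 → β i = 0 := fun i hi =>
        hβS i (by rw [hIp]; simp only [Set.mem_setOf_eq, not_lt]; exact hi.le)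
      have hγz : ∀ i, 0 < n ⬝ᵥ f i → γ i = 0 := fun i hi =>
        hγS i (by rw [hIm]; simp only [Set.mem_setOf_eq, not_lt]; exact hi.le)
      set lam : Fin N → ℝ := fun i => (μ * β i - α i - μ * γ i) / (n ⬝ᵥ f i) with hlam
      have hsval : ∀ i, lam i * (n ⬝ᵥ f i) = μ * β i - α i - μ * γ i := fun i =>
        div_mul_cancel₀ _ (hpne i)
      have hlamnn : ∀ i, 0 ≤ lam i := by
        intro i
        rcases (hpne i).lt_or_gt with hp | hp
        · rw [hlam]
          simp only [hβz i hp, mul_zero, zero_sub]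
          rw [div_nonneg_iff]
          right
          exact ⟨by nlinarith [hγ0 i, hα0 i], hp.le⟩
        · rw [hlam]
          simp only [hαz i hp, hγz i hp, mul_zero, sub_zero]
          exact div_nonneg (by nlinarith [hβ0 i]) hp.le
      have hsum1 : ∑ i, lam i * (n ⬝ᵥ f i) = -1 := by
        calc ∑ i, lam i * (n ⬝ᵥ f i) = ∑ i, (μ * β i - α i - μ * γ i) :=
              Finset.sum_congr rfl fun i _ => hsval i
          _ = μ * (∑ i, β i) - (∑ i, α i) - μ * (∑ i, γ i) := by
              rw [Finset.sum_sub_distrib, Finset.sum_sub_distrib, ← Finset.mul_sum,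
                ← Finset.mul_sum]
          _ = -1 := by rw [hα1, hβ1, hγ1]; ring
      have hsumZ : ∑ i, (lam i * (n ⬝ᵥ f i)) • Z i = μ • zB - zA - μ • zC := by
        calc ∑ i, (lam i * (n ⬝ᵥ f i)) • Z i
            = ∑ i, (μ • (β i • Z i) - α i • Z i - μ • (γ i • Z i)) :=
              Finset.sum_congr rfl fun i _ => by rw [hsval i]; module
          _ = μ • (∑ i, β i • Z i) - (∑ i, α i • Z i) - μ • (∑ i, γ i • Z i) := by
              rw [Finset.sum_sub_distrib, Finset.sum_sub_distrib, ← Finset.smul_sum,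
                ← Finset.smul_sum]
          _ = μ • zB - zA - μ • zC := by rw [← hαx, ← hβx, ← hγx]
      have hexα : ∃ i, α i ≠ 0 := by
        by_contra hc
        push_neg at hc
        simp [hc] at hα1
      obtain ⟨i, hi⟩ := hexα
      have hαpos : 0 < α i := lt_of_le_of_ne (hα0 i) (Ne.symm hi)
      have hpi : n ⬝ᵥ f i < 0 := by
        by_contra hpi
        exact hi (hαS i (by rw [hIm]; exact hpi))
      have hlampos : 0 < lam i := by
        rw [hlam]
        simp only [hβz i hpi, mul_zero, zero_sub]
        rw [div_pos_iff]
        right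
        exact ⟨by nlinarith [hγ0 i], hpi⟩
      refine ⟨lam, hlamnn, fun hc => absurd (congrFun hc i) hlampos.ne', ?_, ?_⟩
      · rw [hdot, hsum1]; norm_num
      · rw [hdot, hcross, hsum1, hsumZ, hx]
        rw [show ((-1 : ℝ))⁻¹ = -1 by norm_num]
        module
end

section
/- For a wrench satisfying the Newton-Euler relation f = m(ẍ_G - g) and τ_O = p_G × f + L̇_G, with n · (ẍ_G - g) ≠ 0 and d_G ≠ d_Z, the COM acceleration satisfies ẍ_G = g + [n · (ẍ_G - g)/(d_G - d_Z)] (p_G - p_Z) + (n × L̇_G)/(m(d_G - d_Z)), where p_Z is the ZMP in the plane at offset d_Z, d_G = n · p_G, d_Z = n · p_Z. -/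
open Matrix

lemma bac_cab (u v w : Fin 3 → ℝ) :
    crossProduct u (crossProduct v w) = (u ⬝ᵥ w) • v - (u ⬝ᵥ v) • w := by
  funext i
  fin_cases i <;>
    simp [cross_apply, dotProduct, Fin.sum_univ_three] <;> ring

/-- COM-ZMP-angular-momentum relation. -/
theorem com_zmp_equation (m : ℝ) (hm : 0 < m)
    (n g pG xGdd LGd : Fin 3 → ℝ) (dZ : ℝ)
    (hn : n ⬝ᵥ n = 1)
    (f τO : Fin 3 → ℝ)
    (hf : f = m • (xGdd - g))
    (hτ : τO = crossProduct pG f + LGd)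
    (hacc : n ⬝ᵥ (xGdd - g) ≠ 0)
    (pZ : Fin 3 → ℝ)
    (hZ : pZ = (n ⬝ᵥ f)⁻¹ • crossProduct n τO + dZ • ((n ⬝ᵥ f)⁻¹ • f))
    (dG : ℝ) (hdG : dG = n ⬝ᵥ pG)
    (hne : dG ≠ dZ) :
    xGdd = g + ((n ⬝ᵥ (xGdd - g)) / (dG - dZ)) • (pG - pZ)
      + (m * (dG - dZ))⁻¹ • crossProduct n LGd := by
  have hd : dG - dZ ≠ 0 := sub_ne_zero.mpr hne
  have hm' : m ≠ 0 := ne_of_gt hm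
  set a : Fin 3 → ℝ := xGdd - g with ha
  have hx : xGdd = g + a := by rw [ha]; abel
  have hnf : n ⬝ᵥ f = m * (n ⬝ᵥ a) := by
    rw [hf]; simp [dotProduct_smul, smul_eq_mul]
  rw [hZ, hτ, map_add (crossProduct n), bac_cab n pG f, hnf, hf, hx, ← hdG]
  obtain ⟨α, hα⟩ : ∃ α, n ⬝ᵥ a = α := ⟨_, rfl⟩
  rw [hα] at hacc ⊢
  match_scalars <;> field_simp <;> ring
end

section
/- In the Linear Pendulum Mode (L̇_G = 0, n · ẍ_G = 0, g = -‖g‖ n), the resultant contact force f = m(ẍ_G - g) is parallel to the vector from the COM G to the ZMP Z scaled by m‖g‖/(d_Z - d_G): f = [m‖g‖/(d_Z - d_G)] (p_Z - p_G), provided d_Z ≠ d_G. -/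
open Matrix

/-!
Along the ground normal the contact force is `n ⬝ᵥ f = m ‖g‖`, since `n ⬝ᵥ ẍ_G = 0`.
Expanding the vector triple product `n × (p_G × f) = (n ⬝ᵥ f) p_G - (n ⬝ᵥ p_G) f` in the
ZMP formula gives `p_Z = p_G + ((d_Z - d_G) / (n ⬝ᵥ f)) f`, so `p_Z - p_G` is a multiple of `f`
with the nonzero factor `(d_Z - d_G) / (m ‖g‖)`.
-/

theorem dotProduct_smul_add_smul_self {ι : Type*} [Fintype ι] (m c : ℝ) (n a : ι → ℝ)
    (hn : n ⬝ᵥ n = 1) (ha : n ⬝ᵥ a = 0) : n ⬝ᵥ (m • (a + c • n)) = m * c := by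
  simp only [dotProduct_smul, dotProduct_add, ha, hn, smul_eq_mul, mul_one, zero_add]

/-- The point of the plane at offset `d` along `n` where the line of action of a force `f`
through `p` meets it. -/
theorem zmp_of_torque_cross (n p f : Fin 3 → ℝ) (d : ℝ) (hnf : n ⬝ᵥ f ≠ 0) :
    (n ⬝ᵥ f)⁻¹ • n ⨯₃ (p ⨯₃ f) + d • ((n ⬝ᵥ f)⁻¹ • f)
      = p + ((d - n ⬝ᵥ p) / (n ⬝ᵥ f)) • f := by
  rw [cross_cross_eq_smul_sub_smul', smul_sub, smul_smul, inv_mul_cancel₀ hnf, one_smul,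
    smul_smul, smul_smul, dotProduct_comm p n, sub_div, sub_smul, div_eq_mul_inv,
    div_eq_mul_inv, mul_comm (n ⬝ᵥ p), mul_comm d]
  abel

theorem lpm_force_direction_general (m gnorm : ℝ)
    (n g pG xGdd : Fin 3 → ℝ) (dZ : ℝ)
    (hn : n ⬝ᵥ n = 1)
    (hgrav : g = -gnorm • n)
    (hLPM1 : n ⬝ᵥ xGdd = 0)
    (f τO : Fin 3 → ℝ)
    (hf : f = m • (xGdd - g))
    (hτ : τO = crossProduct pG f)
    (hnf : n ⬝ᵥ f ≠ 0)
    (pZ : Fin 3 → ℝ)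
    (hZ : pZ = (n ⬝ᵥ f)⁻¹ • crossProduct n τO + dZ • ((n ⬝ᵥ f)⁻¹ • f))
    (dG : ℝ) (hdG : dG = n ⬝ᵥ pG)
    (hne : dZ ≠ dG) :
    f = (m * gnorm / (dZ - dG)) • (pZ - pG) := by
  have hnormal : n ⬝ᵥ f = m * gnorm := by
    rw [hf, hgrav, sub_eq_add_neg, ← neg_smul, neg_neg]
    exact dotProduct_smul_add_smul_self m gnorm n xGdd hn hLPM1
  have hoffset : pZ - pG = ((dZ - dG) / (m * gnorm)) • f := by
    rw [hZ, hτ, zmp_of_torque_cross n pG f dZ hnf, ← hdG, hnormal, add_sub_cancel_left]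
  have hmg : m * gnorm ≠ 0 := hnormal ▸ hnf
  have hd : dZ - dG ≠ 0 := sub_ne_zero.mpr hne
  rw [hoffset, smul_smul, div_mul_div_cancel₀ hd, div_self hmg, one_smul]

/-- In the Linear Pendulum Mode, the resultant contact force
points from the COM `G` to the ZMP `Z`:
`f = [m‖g‖/(d_Z - d_G)] (p_Z - p_G)`. -/
theorem lpm_force_direction (m gnorm : ℝ) (hm : 0 < m) (hg : 0 < gnorm)
    (n g pG xGdd : Fin 3 → ℝ) (dZ : ℝ)
    (hn : n ⬝ᵥ n = 1)
    (hgrav : g = -gnorm • n)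
    (hLPM1 : n ⬝ᵥ xGdd = 0)
    (f τO : Fin 3 → ℝ)
    (hf : f = m • (xGdd - g))
    (hτ : τO = crossProduct pG f)
    (hnf : n ⬝ᵥ f ≠ 0)
    (pZ : Fin 3 → ℝ)
    (hZ : pZ = (n ⬝ᵥ f)⁻¹ • crossProduct n τO + dZ • ((n ⬝ᵥ f)⁻¹ • f))
    (dG : ℝ) (hdG : dG = n ⬝ᵥ pG)
    (hne : dZ ≠ dG) :
    f = (m * gnorm / (dZ - dG)) • (pZ - pG) :=
  lpm_force_direction_general m gnorm n g pG xGdd dZ hn hgrav hLPM1 f τO hf hτ hnf pZ hZ dG hdG hne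
end

section
/- For the n-Moment Point map M(O) with the wrench referenced at O, there is no nonzero displacement vector v of the reference point, valid for all resultant forces f with n · f ≠ 0, that leaves the n-MP invariant. Specifically, a displacement v leaves the n-component of the n-MP invariant only if v is parallel to n or to f, and displacements parallel to n change the planar components. -/
open Matrix

set_option maxHeartbeats 1000000 in
/-- No nonzero displacement of the reference point, valid for all
resultant forces `f` with `n ⋅ f ≠ 0` (and all moments), leaves the n-Moment
Point invariant. -/
theorem nmp_no_invariant_displacement (n pO : Fin 3 → ℝ)
    (hn : n ⬝ᵥ n = 1) :
    ¬ ∃ v : Fin 3 → ℝ, v ≠ 0 ∧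
      ∀ f τO : Fin 3 → ℝ, n ⬝ᵥ f ≠ 0 →
        (pO + v) + (n ⬝ᵥ f)⁻¹ • crossProduct n (τO - crossProduct v f)
            + ((n ⬝ᵥ (τO - crossProduct v f)) / (n ⬝ᵥ f)) • n
          = pO + (n ⬝ᵥ f)⁻¹ • crossProduct n τO
            + ((n ⬝ᵥ τO) / (n ⬝ᵥ f)) • n := by
  rintro ⟨v, hv, H⟩
  simp only [dotProduct, Fin.sum_univ_three] at hn
  have hnf : n ⬝ᵥ (n + (crossProduct n) v) = 1 := by
    simp only [dotProduct, Fin.sum_univ_three, cross_apply, Pi.add_apply,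
      Matrix.cons_val_zero, Matrix.cons_val_one, Matrix.head_cons,
      Matrix.cons_val_two, Matrix.tail_cons]
    nlinarith [hn]
  have h1 := H n 0 (by simp [dotProduct, Fin.sum_univ_three, hn])
  have h2 := H (n + crossProduct n v) 0 (by rw [hnf]; norm_num)
  rw [hnf] at h2
  simp only [dotProduct, Fin.sum_univ_three, hn] at h1
  have e10 := congrFun h1 0
  have e11 := congrFun h1 1
  have e12 := congrFun h1 2
  have e20 := congrFun h2 0
  have e21 := congrFun h2 1
  have e22 := congrFun h2 2
  simp only [cross_apply, dotProduct, Fin.sum_univ_three, Pi.add_apply, Pi.sub_apply,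
    Pi.smul_apply, Pi.zero_apply, smul_eq_mul, Matrix.cons_val_zero, Matrix.cons_val_one,
    Matrix.head_cons, Matrix.cons_val_two, Matrix.tail_cons, Matrix.vecHead, Matrix.vecTail,
    Function.comp_apply, zero_sub, sub_zero, zero_add, add_zero, mul_zero, zero_mul,
    inv_one, one_smul, one_mul, div_one, mul_one, neg_neg, mul_neg, neg_mul, Fin.succ_zero_eq_one,
    Fin.succ_one_eq_two] at e10 e11 e12 e20 e21 e22
  have hA : n 0 * v 0 + n 1 * v 1 + n 2 * v 2 = 0 := by
    linear_combination n 0 * e10 + n 1 * e11 + n 2 * e12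
  have hB : v 0 ^ 2 + v 1 ^ 2 + v 2 ^ 2 = 0 := by
    linear_combination (-(n 0)) * e20 + (-(n 1)) * e21 + (-(n 2)) * e22
      - (v 0 ^ 2 + v 1 ^ 2 + v 2 ^ 2) * (1 + (n 0 * n 0 + n 1 * n 1 + n 2 * n 2)) * hn
      + (1 + (n 0 * v 0 + n 1 * v 1 + n 2 * v 2) * (n 0 * n 0 + n 1 * n 1 + n 2 * n 2)) * hA
  apply hv
  funext i
  fin_cases i <;> simp <;>
    nlinarith [hB, sq_nonneg (v 0), sq_nonneg (v 1), sq_nonneg (v 2)]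
end
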